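/- arXiv:1905.07107 — 2 statements merged into one kernel-verified Lean document; each statement's English description precedes it below -/
import Mathlib

section
/- Let f₀ be a bounded continuous density on ℝ^d and let f₁ be the uniform density on a bounded measurable set containing the support region of interest, with f₁ constant equal to c > 0 there. Then for points x, x' in this region with f₀(x), f₀(x') > 0 and f₁(x) = f₁(x') = c, the statistic d·(log g_k^N(x) − log g_k^N(x')) converges in probability to log f₀(x') − log f₀(x) as N → ∞ (with k/N → 0, k → ∞), and if f₀(x') = c this limit equals log(f₁(x)/f₀(x)). -/
/-!
Let `R` be the `k`-th nearest neighbour distance at `y` among `N` i.i.d. samples of a density `f`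
continuous and positive at `y`, and `V` the volume of the unit ball. Choose `r` with
`N V rᵈ f(y) = t k`; since `k / N → 0` we have `r → 0`, so by continuity the ball `B(y, r)` has
probability `≈ t k / N`. The number of samples in it is binomial, with variance at most its mean,
so by Chebyshev it is `t k (1 + o(1))` in probability as `k → ∞`. For `t = exp (± ε / 2)` the two
counts straddle `k`, which squeezes `R`: `d log R - log (k / N) → -log (V f(y))` in probability.
Subtracting this at `x'` from the one at `x` cancels `log (k / N)` and `log V`.
-/

open MeasureTheory ProbabilityTheory Filter Topology

/-- The `k`-th nearest neighbor distance of `x` among the points `X 0, ..., X (N-1)`. -/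
noncomputable def knnDist {α : Type*} [PseudoMetricSpace α] (k N : ℕ) (x : α)
    (X : ℕ → α) : ℝ :=
  sInf {r : ℝ | 0 ≤ r ∧ k ≤ ((Finset.range N).filter (fun i => dist x (X i) ≤ r)).card}

open Finset Metric

theorem knnDist_mem_Icc {α : Type*} [PseudoMetricSpace α] {k N : ℕ} {x : α} {Z : ℕ → α}
    {r s : ℝ} (hs : 0 ≤ s) (hr_card : #{i ∈ range N | dist x (Z i) ≤ r} < k)
    (hs_card : k ≤ #{i ∈ range N | dist x (Z i) ≤ s}) :
    knnDist k N x Z ∈ Set.Icc r s := by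
  have hsS : s ∈ {t : ℝ | 0 ≤ t ∧ k ≤ #{i ∈ range N | dist x (Z i) ≤ t}} := ⟨hs, hs_card⟩
  refine ⟨le_csInf ⟨s, hsS⟩ fun t ht => ?_, csInf_le ⟨0, fun _ ht => ht.1⟩ hsS⟩
  by_contra! htr
  have hmono : #{i ∈ range N | dist x (Z i) ≤ t} ≤ #{i ∈ range N | dist x (Z i) ≤ r} :=
    card_le_card <| monotone_filter_right _ fun _ _ hi => hi.trans htr.le
  exact (ht.2.trans hmono).not_gt hr_card

theorem log_knnDist_mem_Icc {α : Type*} [PseudoMetricSpace α] {k N : ℕ} {x : α} {Z : ℕ → α}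
    {d a b : ℝ} (hd : 0 < d)
    (ha_card : #{i ∈ range N | dist x (Z i) ≤ Real.exp (a / d)} < k)
    (hb_card : k ≤ #{i ∈ range N | dist x (Z i) ≤ Real.exp (b / d)}) :
    d * Real.log (knnDist k N x Z) ∈ Set.Icc a b := by
  obtain ⟨ha, hb⟩ := knnDist_mem_Icc (Real.exp_pos _).le ha_card hb_card
  have hpos := (Real.exp_pos _).trans_le ha
  constructor
  · rw [← div_le_iff₀' hd, ← Real.exp_le_exp, Real.exp_log hpos]
    exact ha
  · rw [← le_div_iff₀' hd, ← Real.exp_le_exp, Real.exp_log hpos]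
    exact hb

theorem MeasureTheory.TendstoInMeasure.sub {α ι E : Type*} [MeasurableSpace α] {μ : Measure α}
    [SeminormedAddCommGroup E] {l : Filter ι} {f f' : ι → α → E} {g g' : α → E}
    (hf : TendstoInMeasure μ f l g) (hf' : TendstoInMeasure μ f' l g') :
    TendstoInMeasure μ (fun i x => f i x - f' i x) l (fun x => g x - g' x) := by
  rw [tendstoInMeasure_iff_norm] at *
  intro ε hε
  have hsum := (hf (ε / 2) (half_pos hε)).add (hf' (ε / 2) (half_pos hε))
  rw [add_zero] at hsum
  refine tendsto_of_tendsto_of_tendsto_of_le_of_le tendsto_const_nhds hsum (fun _ => zero_le)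
    fun i => (measure_mono fun x hx => ?_).trans (measure_union_le _ _)
  by_contra! hx'
  simp only [Set.mem_union, Set.mem_ofPred_eq, not_or, not_le] at hx hx'
  have := norm_sub_le (f i x - g x) (f' i x - g' x)
  rw [sub_sub_sub_comm] at this
  linarith

section WeakLaw

open scoped Classical

variable {Ω β : Type*} [MeasurableSpace Ω] [MeasurableSpace β] {P : Measure Ω}
  [IsProbabilityMeasure P] {X : ℕ → Ω → β} {ν : Measure β}

theorem meas_ge_abs_card_filter_sub_le (hmeas : ∀ i, Measurable (X i))
    (hindep : iIndepFun X P) (hdist : ∀ i, P.map (X i) = ν) {s : Set β} (hs : MeasurableSet s)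
    (N : ℕ) {t : ℝ} (ht : 0 < t) :
    P {ω | t ≤ |(#{i ∈ range N | X i ω ∈ s} : ℝ) - N * ν.real s|}
      ≤ ENNReal.ofReal (N * ν.real s / t ^ 2) := by
  set B : ℕ → Ω → ℝ := fun i => s.indicator 1 ∘ X i
  have hB_meas : ∀ i, Measurable (B i) := fun i => (measurable_one.indicator hs).comp (hmeas i)
  have hB_sq : ∀ i, B i ^ 2 = B i := fun i => funext fun ω => by
    by_cases h : X i ω ∈ s <;> simp [B, h]
  have hB_memLp : ∀ i, MemLp (B i) 2 P := fun i =>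
    MemLp.of_bound (hB_meas i).aestronglyMeasurable 1 <| Eventually.of_forall fun ω => by
      by_cases h : X i ω ∈ s <;> simp [B, h]
  have hB_mean : ∀ i, P[B i] = ν.real s := fun i => by
    rw [← hdist i, ← integral_indicator_one hs,
      integral_map (hmeas i).aemeasurable (measurable_one.indicator hs).aestronglyMeasurable]
    rfl
  have hB_var : ∀ i, variance (B i) P ≤ ν.real s := fun i => calc
    variance (B i) P ≤ P[B i ^ 2] := variance_le_expectation_sq (hB_meas i).aestronglyMeasurable
    _ = ν.real s := by rw [hB_sq, hB_mean]
  have hcount : ∀ ω, (#{i ∈ range N | X i ω ∈ s} : ℝ) = (∑ i ∈ range N, B i) ω := fun ω => by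
    simp only [natCast_card_filter, Finset.sum_apply, B, Function.comp_apply, Set.indicator_apply,
      Pi.one_apply]
  have hS_mean : P[∑ i ∈ range N, B i] = N * ν.real s := by
    simp only [Finset.sum_apply]
    rw [integral_finsetSum _ fun i _ => (hB_memLp i).integrable one_le_two]
    simp [hB_mean]
  have hS_var : variance (∑ i ∈ range N, B i) P ≤ N * ν.real s := by
    rw [IndepFun.variance_sum (fun i _ => hB_memLp i)
      fun i _ j _ hij => (hindep.comp (fun _ => s.indicator (1 : β → ℝ))
        fun _ => measurable_one.indicator hs).indepFun hij]
    simpa using sum_le_sum fun i (_ : i ∈ range N) => hB_var i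
  have hcheb := meas_ge_le_variance_div_sq (memLp_finsetSum' (range N) fun i _ => hB_memLp i) ht
  rw [hS_mean] at hcheb
  simp_rw [hcount]
  exact hcheb.trans (ENNReal.ofReal_le_ofReal (by gcongr))

theorem tendstoInMeasure_card_filter_div (hmeas : ∀ i, Measurable (X i))
    (hindep : iIndepFun X P) (hdist : ∀ i, P.map (X i) = ν) {s : ℕ → Set β}
    (hs : ∀ N, MeasurableSet (s N)) {k : ℕ → ℕ} (hk : Tendsto k atTop atTop) {t : ℝ}
    (hmean : Tendsto (fun N => N * ν.real (s N) / k N) atTop (𝓝 t)) :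
    TendstoInMeasure P (fun N ω => (#{i ∈ range N | X i ω ∈ s N} : ℝ) / k N) atTop
      (fun _ => t) := by
  rw [tendstoInMeasure_iff_dist]
  intro η hη
  have hkR : Tendsto (fun N => (k N : ℝ)) atTop atTop := tendsto_natCast_atTop_atTop.comp hk
  have hbound : Tendsto (fun N => ENNReal.ofReal (N * ν.real (s N) / k N / ((η / 2) ^ 2 * k N)))
      atTop (𝓝 0) := by
    simpa using ENNReal.tendsto_ofReal (hmean.div_atTop (hkR.const_mul_atTop (by positivity)))
  refine tendsto_of_tendsto_of_tendsto_of_le_of_le' tendsto_const_nhds hbound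
    (Eventually.of_forall fun _ => zero_le) ?_
  filter_upwards [hk.eventually_ge_atTop 1, (Metric.tendsto_nhds.1 hmean) (η / 2) (half_pos hη)]
    with N hkN hN
  have hkpos : (0 : ℝ) < k N := by exact_mod_cast hkN
  refine (measure_mono fun ω hω => ?_).trans
    ((meas_ge_abs_card_filter_sub_le hmeas hindep hdist (hs N) N
      (by positivity : 0 < η / 2 * k N)).trans_eq (by congr 1; field_simp))
  simp only [Set.mem_ofPred_eq, Real.dist_eq] at hω hN ⊢
  have hdev : η / 2 ≤ |(#{i ∈ range N | X i ω ∈ s N} : ℝ) / k N - N * ν.real (s N) / k N| := by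
    linarith [abs_sub_le ((#{i ∈ range N | X i ω ∈ s N} : ℝ) / k N) (N * ν.real (s N) / k N) t]
  rwa [← sub_div, abs_div, abs_of_pos hkpos, le_div_iff₀ hkpos] at hdev

end WeakLaw

theorem withDensity_real_mem_Icc {α : Type*} [MeasurableSpace α] {μ : Measure α} {f : α → ℝ}
    {s : Set α} {a b : ℝ} (hs : MeasurableSet s) (hμs : μ s ≠ ⊤) (ha : 0 ≤ a) (hab : a ≤ b)
    (hf : ∀ z ∈ s, f z ∈ Set.Icc a b) :
    (μ.withDensity fun z => ENNReal.ofReal (f z)).real s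
      ∈ Set.Icc (a * μ.real s) (b * μ.real s) := by
  have hlo : ENNReal.ofReal a * μ s ≤ ∫⁻ z in s, ENNReal.ofReal (f z) ∂μ := by
    rw [← setLIntegral_const]
    exact lintegral_mono_ae <| ae_restrict_of_forall_mem hs fun z hz =>
      ENNReal.ofReal_le_ofReal (hf z hz).1
  have hhi : ∫⁻ z in s, ENNReal.ofReal (f z) ∂μ ≤ ENNReal.ofReal b * μ s := by
    rw [← setLIntegral_const]
    exact lintegral_mono_ae <| ae_restrict_of_forall_mem hs fun z hz =>
      ENNReal.ofReal_le_ofReal (hf z hz).2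
  have hfin : ENNReal.ofReal b * μ s ≠ ⊤ := ENNReal.mul_ne_top ENNReal.ofReal_ne_top hμs
  have hval : (μ.withDensity fun z => ENNReal.ofReal (f z)).real s
      = (∫⁻ z in s, ENNReal.ofReal (f z) ∂μ).toReal := by
    rw [measureReal_def, withDensity_apply _ hs]
  rw [hval]
  constructor
  · simpa [ENNReal.toReal_mul, ha, measureReal_def] using
      ENNReal.toReal_mono (ne_top_of_le_ne_top hfin hhi) hlo
  · simpa [ENNReal.toReal_mul, ha.trans hab, measureReal_def] using ENNReal.toReal_mono hfin hhi

theorem measureReal_ball_pos {X : Type*} [PseudoMetricSpace X] [ProperSpace X] [MeasurableSpace X]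
    (μ : Measure X) [μ.IsOpenPosMeasure] [IsFiniteMeasureOnCompacts μ] (x : X) {r : ℝ}
    (hr : 0 < r) : 0 < μ.real (ball x r) :=
  ENNReal.toReal_pos (measure_ball_pos μ x hr).ne' measure_ball_lt_top.ne

section AddHaar

variable {E : Type*} [NormedAddCommGroup E] [NormedSpace ℝ E] [FiniteDimensional ℝ E]
  [MeasurableSpace E] [BorelSpace E] (μ : Measure E) [μ.IsAddHaarMeasure] {f : E → ℝ} {y : E}

theorem tendsto_withDensity_real_closedBall_div (hf : ContinuousAt f y) (hy : 0 < f y) :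
    Tendsto (fun r => (μ.withDensity fun z => ENNReal.ofReal (f z)).real (closedBall y r)
      / μ.real (closedBall y r)) (𝓝[>] 0) (𝓝 (f y)) := by
  rw [Metric.tendsto_nhds]
  intro η hη
  obtain ⟨δ, hδ_pos, hδη, hδy⟩ : ∃ δ, 0 < δ ∧ δ < η ∧ δ ≤ f y :=
    ⟨min (η / 2) (f y), by positivity, (min_le_left _ _).trans_lt (half_lt_self hη),
      min_le_right _ _⟩
  obtain ⟨ρ, hρ, hfρ⟩ := Metric.continuousAt_iff.1 hf δ hδ_pos
  filter_upwards [Ioo_mem_nhdsGT hρ] with r hr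
  have hμ : 0 < μ.real (closedBall y r) :=
    ENNReal.toReal_pos (measure_closedBall_pos μ y hr.1).ne'
      (measure_closedBall_lt_top (μ := μ)).ne
  obtain ⟨hlo, hhi⟩ := withDensity_real_mem_Icc (b := f y + δ) measurableSet_closedBall
    (measure_closedBall_lt_top (μ := μ)).ne (sub_nonneg.2 hδy) (by linarith)
    fun z hz => by
      have := abs_sub_lt_iff.1 (hfρ ((mem_closedBall.1 hz).trans_lt hr.2))
      exact ⟨by linarith, by linarith⟩
  rw [← le_div_iff₀ hμ] at hlo
  rw [← div_le_iff₀ hμ] at hhi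
  rw [Real.dist_eq, abs_sub_lt_iff]
  constructor <;> linarith

theorem tendsto_natCast_mul_withDensity_real_closedBall_div [Nontrivial E]
    (hf : ContinuousAt f y) (hy : 0 < f y) {k : ℕ → ℕ} (hk_top : Tendsto k atTop atTop)
    (hk_ratio : Tendsto (fun N => (k N : ℝ) / N) atTop (𝓝 0)) (s : ℝ) :
    Tendsto (fun N => N * (μ.withDensity fun z => ENNReal.ofReal (f z)).real
        (closedBall y (Real.exp ((Real.log (k N / N) + s) / Module.finrank ℝ E))) / k N)
      atTop (𝓝 (f y * (μ.real (ball 0 1) * Real.exp s))) := by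
  have hd : (0 : ℝ) < Module.finrank ℝ E := by exact_mod_cast Module.finrank_pos
  have hV := measureReal_ball_pos μ 0 one_pos
  have hpos : ∀ᶠ N in atTop, (0 : ℝ) < k N ∧ (0 : ℝ) < N := by
    filter_upwards [hk_top.eventually_ge_atTop 1, eventually_ge_atTop 1] with N hkN hN
    exact ⟨by exact_mod_cast hkN, by exact_mod_cast hN⟩
  have hr : Tendsto (fun N => Real.exp ((Real.log (k N / N) + s) / Module.finrank ℝ E)) atTop
      (𝓝[>] 0) :=
    Real.tendsto_exp_atBot_nhdsGT.comp <| (tendsto_atBot_add_const_right _ s <|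
      Real.tendsto_log_nhdsGT_zero.comp <| tendsto_nhdsWithin_iff.2
        ⟨hk_ratio, hpos.mono fun N hN => div_pos hN.1 hN.2⟩).atBot_div_const hd
  refine (((tendsto_withDensity_real_closedBall_div μ hf hy).comp hr).mul_const
    (μ.real (ball 0 1) * Real.exp s)).congr' ?_
  filter_upwards [hpos] with N ⟨hkN, hN⟩
  have hvol : μ.real (closedBall y (Real.exp ((Real.log (k N / N) + s) / Module.finrank ℝ E)))
      = k N / N * (μ.real (ball 0 1) * Real.exp s) := by
    rw [Measure.addHaar_real_closedBall μ y (Real.exp_pos _).le, ← Real.exp_nat_mul,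
      mul_div_cancel₀ _ hd.ne', Real.exp_add, Real.exp_log (div_pos hkN hN)]
    ring
  simp only [Function.comp_apply, hvol]
  field_simp


theorem tendstoInMeasure_card_closedBall_div [Nontrivial E] {Ω : Type*} [MeasurableSpace Ω]
    {P : Measure Ω} [IsProbabilityMeasure P] {X : ℕ → Ω → E} (hmeas : ∀ i, Measurable (X i))
    (hindep : iIndepFun X P)
    (hdist : ∀ i, P.map (X i) = μ.withDensity fun z => ENNReal.ofReal (f z))
    (hf : ContinuousAt f y) (hy : 0 < f y) {k : ℕ → ℕ} (hk_top : Tendsto k atTop atTop)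
    (hk_ratio : Tendsto (fun N => (k N : ℝ) / N) atTop (𝓝 0)) (s : ℝ) :
    TendstoInMeasure P
      (fun N ω => (#{i ∈ range N | dist y (X i ω) ≤ Real.exp ((Real.log (k N / N)
        + (s - Real.log (μ.real (ball 0 1) * f y))) / Module.finrank ℝ E)} : ℝ) / k N)
      atTop (fun _ => Real.exp s) := by
  set c := Real.log (μ.real (ball 0 1) * f y)
  have hV := measureReal_ball_pos μ 0 one_pos
  have hlim : f y * (μ.real (ball 0 1) * Real.exp (s - c)) = Real.exp s := by
    rw [Real.exp_sub, Real.exp_log (mul_pos hV hy)]; field_simp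
  simpa only [hlim, mem_closedBall'] using tendstoInMeasure_card_filter_div
    (s := fun N => closedBall y (Real.exp ((Real.log (k N / N) + (s - c)) / Module.finrank ℝ E)))
    hmeas hindep hdist (fun _ => measurableSet_closedBall) hk_top
    (tendsto_natCast_mul_withDensity_real_closedBall_div μ hf hy hk_top hk_ratio (s - c))

theorem tendstoInMeasure_log_knnDist [Nontrivial E] {Ω : Type*} [MeasurableSpace Ω]
    {P : Measure Ω} [IsProbabilityMeasure P] {X : ℕ → Ω → E} (hmeas : ∀ i, Measurable (X i))
    (hindep : iIndepFun X P)
    (hdist : ∀ i, P.map (X i) = μ.withDensity fun z => ENNReal.ofReal (f z))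
    (hf : ContinuousAt f y) (hy : 0 < f y) {k : ℕ → ℕ} (hk_top : Tendsto k atTop atTop)
    (hk_ratio : Tendsto (fun N => (k N : ℝ) / N) atTop (𝓝 0)) :
    TendstoInMeasure P
      (fun N ω => Module.finrank ℝ E * Real.log (knnDist (k N) N y fun i => X i ω)
        - Real.log (k N / N))
      atTop (fun _ => -Real.log (μ.real (ball 0 1) * f y)) := by
  have hcount := tendstoInMeasure_card_closedBall_div μ hmeas hindep hdist hf hy hk_top hk_ratio
  simp_rw [tendstoInMeasure_iff_dist] at hcount ⊢
  intro ε hε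
  have hup := hcount (ε / 2) (Real.exp (ε / 2) - 1) (by simp [hε])
  have hlow := hcount (-(ε / 2)) (1 - Real.exp (-(ε / 2))) (by simp [hε])
  refine tendsto_of_tendsto_of_tendsto_of_le_of_le' tendsto_const_nhds
    (by simpa only [add_zero] using hup.add hlow) (Eventually.of_forall fun _ => zero_le) ?_
  filter_upwards [hk_top.eventually_ge_atTop 1] with N hkN
  refine (measure_mono fun ω hω => ?_).trans (measure_union_le _ _)
  have hk : (0 : ℝ) < k N := by exact_mod_cast hkN
  -- off both deviation events, at least `k` samples lie in the outer ball and fewer in the inner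
  have above : ∀ {a t : ℝ}, ¬t - 1 ≤ dist (a / k N) t → k N < a := fun {a t} h => by
    rw [← one_lt_div hk]; linarith [Real.sub_le_dist t (a / k N), dist_comm (a / k N) t]
  have below : ∀ {a t : ℝ}, ¬1 - t ≤ dist (a / k N) t → a < k N := fun {a t} h => by
    rw [← div_lt_one hk]; linarith [Real.sub_le_dist (a / k N) t]
  by_contra hgood
  have h_up := above fun h => hgood (Or.inl h)
  have h_low := below fun h => hgood (Or.inr h)
  norm_cast at h_up h_low
  obtain ⟨hR_low, hR_up⟩ :=
    log_knnDist_mem_Icc (Nat.cast_pos.2 Module.finrank_pos) h_low h_up.le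
  change ε ≤ dist _ _ at hω
  rw [Real.dist_eq, sub_neg_eq_add, le_abs'] at hω
  rcases hω with hω | hω <;> linarith

end AddHaar

theorem stmt_14_general
    {Ω : Type*} [MeasurableSpace Ω] (P : Measure Ω) [IsProbabilityMeasure P]
    {d : ℕ} (hd : 1 ≤ d)
    (f₀ : EuclideanSpace ℝ (Fin d) → ℝ)
    (hf₀_cont : Continuous f₀)
    (U : Set (EuclideanSpace ℝ (Fin d)))
    (c : ℝ) (hc : 0 < c)
    (f₁ : EuclideanSpace ℝ (Fin d) → ℝ)
    (hf₁_unif : ∀ z ∈ U, f₁ z = c)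
    (x x' : EuclideanSpace ℝ (Fin d)) (hxU : x ∈ U)
    (hx_pos : 0 < f₀ x) (hx'_pos : 0 < f₀ x')
    (X : ℕ → Ω → EuclideanSpace ℝ (Fin d)) (hmeas : ∀ i, Measurable (X i))
    (hindep : iIndepFun X P)
    (hdist : ∀ i, P.map (X i)
      = MeasureTheory.volume.withDensity (fun z => ENNReal.ofReal (f₀ z)))
    (k : ℕ → ℕ) (hk_top : Tendsto k atTop atTop)
    (hk_ratio : Tendsto (fun N => (k N : ℝ) / N) atTop (𝓝 0)) :
    TendstoInMeasure P
      (fun N ω => (d : ℝ) * (Real.log (knnDist (k N) N x (fun i => X i ω))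
          - Real.log (knnDist (k N) N x' (fun i => X i ω))))
      atTop (fun _ => Real.log (f₀ x') - Real.log (f₀ x))
    ∧ (f₀ x' = c →
        Real.log (f₀ x') - Real.log (f₀ x) = Real.log (f₁ x / f₀ x)) := by
  have : Nonempty (Fin d) := ⟨⟨0, hd⟩⟩
  refine ⟨?_, fun h => by rw [h, hf₁_unif x hxU, Real.log_div hc.ne' hx_pos.ne']⟩
  have hlim := (tendstoInMeasure_log_knnDist volume hmeas hindep hdist hf₀_cont.continuousAt
    hx_pos hk_top hk_ratio).sub
    (tendstoInMeasure_log_knnDist volume hmeas hindep hdist hf₀_cont.continuousAt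
      hx'_pos hk_top hk_ratio)
  rw [finrank_euclideanSpace_fin] at hlim
  have hV := measureReal_ball_pos (volume : Measure (EuclideanSpace ℝ (Fin d))) 0 one_pos
  convert hlim using 2 with N
  · funext ω; ring
  · rw [Real.log_mul hV.ne' hx_pos.ne', Real.log_mul hV.ne' hx'_pos.ne']
    ring

/-- Theorem 1 of the paper: For a bounded continuous density `f₀`, a
uniform anomaly density `f₁` equal to `c > 0` on a bounded region containing `x` and `x'`,
and points `x, x'` with `f₀ x, f₀ x' > 0`, the ODIT evidence
`d (log g_k^N(x) − log g_k^N(x'))` converges in probability to `log f₀ x' − log f₀ x`;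
if moreover `f₀ x' = c` then this limit equals `log (f₁ x / f₀ x)`. -/
theorem stmt_14
    {Ω : Type*} [MeasurableSpace Ω] (P : Measure Ω) [IsProbabilityMeasure P]
    {d : ℕ} (hd : 1 ≤ d)
    (f₀ : EuclideanSpace ℝ (Fin d) → ℝ)
    (hf₀_nonneg : ∀ z, 0 ≤ f₀ z) (hf₀_cont : Continuous f₀)
    (hf₀_bdd : ∃ Cb : ℝ, ∀ z, f₀ z ≤ Cb)
    (hf₀_dens : MeasureTheory.volume.withDensity (fun z => ENNReal.ofReal (f₀ z)) Set.univ = 1)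
    (U : Set (EuclideanSpace ℝ (Fin d))) (hU_meas : MeasurableSet U)
    (hU_bdd : Bornology.IsBounded U)
    (c : ℝ) (hc : 0 < c)
    (f₁ : EuclideanSpace ℝ (Fin d) → ℝ)
    (hf₁_unif : ∀ z ∈ U, f₁ z = c)
    (hf₁_dens : MeasureTheory.volume.withDensity (fun z => ENNReal.ofReal (f₁ z)) Set.univ = 1)
    (x x' : EuclideanSpace ℝ (Fin d)) (hxU : x ∈ U) (hx'U : x' ∈ U)
    (hx_pos : 0 < f₀ x) (hx'_pos : 0 < f₀ x')
    (X : ℕ → Ω → EuclideanSpace ℝ (Fin d)) (hmeas : ∀ i, Measurable (X i))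
    (hindep : iIndepFun X P)
    (hdist : ∀ i, P.map (X i)
      = MeasureTheory.volume.withDensity (fun z => ENNReal.ofReal (f₀ z)))
    (k : ℕ → ℕ) (hk_top : Tendsto k atTop atTop)
    (hk_ratio : Tendsto (fun N => (k N : ℝ) / N) atTop (𝓝 0)) :
    TendstoInMeasure P
      (fun N ω => (d : ℝ) * (Real.log (knnDist (k N) N x (fun i => X i ω))
          - Real.log (knnDist (k N) N x' (fun i => X i ω))))
      atTop (fun _ => Real.log (f₀ x') - Real.log (f₀ x))
    ∧ (f₀ x' = c →
        Real.log (f₀ x') - Real.log (f₀ x) = Real.log (f₁ x / f₀ x)) :=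
  stmt_14_general P hd f₀ hf₀_cont U c hc f₁ hf₁_unif x x' hxU hx_pos hx'_pos X hmeas hindep hdist k
    hk_top hk_ratio
end

section
/- Let X₁,...,X_N be i.i.d. from a density f on ℝ^d positive and continuous at x. Fix k, and let g_k^N(x) be the k-th nearest neighbor distance. Then for any ε > 0, P(V_d · g_k^N(x)^d > (k/N)·(1+ε)/f(x)) → e^{-λ} Σ_{j=0}^{k-1} λ^j/j! with λ = k(1+ε); in particular N·V_d·g_k^N(x)^d·f(x) → Gamma(k,1) in distribution. -/
open MeasureTheory ProbabilityTheory Filter Topology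
open scoped ENNReal NNReal

lemma binom_prob {Ω : Type*} [MeasurableSpace Ω] (P : Measure Ω) [IsProbabilityMeasure P]
    (Q : ℕ → Ω → Prop) [∀ i ω, Decidable (Q i ω)]
    (hE : ∀ i, MeasurableSet {ω | Q i ω}) (p : ℝ≥0∞)
    (hp : ∀ i, P {ω | Q i ω} = p)
    (hfact : ∀ (N : ℕ) (F : ℕ → Set Ω),
      (∀ i, F i = {ω | Q i ω} ∨ F i = {ω | Q i ω}ᶜ) →
      P (⋂ i ∈ Finset.range N, F i) = ∏ i ∈ Finset.range N, P (F i))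
    (k N : ℕ) :
    P {ω | ((Finset.range N).filter (fun i => Q i ω)).card < k}
      = ∑ j ∈ Finset.range (min k (N + 1)),
          (N.choose j) * p ^ j * (1 - p) ^ (N - j) := by
  classical
  set D : Finset ℕ → Set Ω := fun S => {ω | (Finset.range N).filter (fun i => Q i ω) = S}
    with hD
  set 𝒮 : Finset (Finset ℕ) := (Finset.range N).powerset.filter (fun S => S.card < k) with h𝒮
  have hunion : {ω | ((Finset.range N).filter (fun i => Q i ω)).card < k}
      = ⋃ S ∈ 𝒮, D S := by
    ext ω
    simp only [Set.mem_setOf_eq, Set.mem_iUnion, h𝒮, Finset.mem_filter, Finset.mem_powerset, hD]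
    constructor
    · intro h
      exact ⟨_, ⟨Finset.filter_subset _ _, h⟩, rfl⟩
    · rintro ⟨S, ⟨-, hcard⟩, rfl⟩
      exact hcard
  have hDinter : ∀ S ∈ 𝒮, D S = ⋂ i ∈ Finset.range N,
      (if i ∈ S then {ω | Q i ω} else {ω | Q i ω}ᶜ) := by
    intro S hS
    have hSsub : S ⊆ Finset.range N := Finset.mem_powerset.1 (Finset.mem_filter.1 hS).1
    ext ω
    simp only [hD, Set.mem_setOf_eq, Set.mem_iInter, Finset.mem_range]
    constructor
    · intro h i hi
      by_cases hiS : i ∈ S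
      · rw [if_pos hiS]
        have : i ∈ (Finset.range N).filter (fun i => Q i ω) := h ▸ hiS
        exact (Finset.mem_filter.1 this).2
      · rw [if_neg hiS]
        intro hQ
        exact hiS (h ▸ Finset.mem_filter.2 ⟨Finset.mem_range.2 hi, hQ⟩)
    · intro h
      ext i
      simp only [Finset.mem_filter, Finset.mem_range]
      constructor
      · rintro ⟨hi, hiQ⟩
        by_contra hiS
        have := h i hi
        rw [if_neg hiS] at this
        exact this hiQ
      · intro hiS
        have hi := Finset.mem_range.1 (hSsub hiS)
        have := h i hi
        rw [if_pos hiS] at this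
        exact ⟨hi, this⟩
  have hDmeas : ∀ S ∈ 𝒮, MeasurableSet (D S) := by
    intro S hS
    rw [hDinter S hS]
    exact MeasurableSet.biInter (Set.to_countable _) fun i _ => by
      split_ifs
      · exact hE i
      · exact (hE i).compl
  have hdisj : (𝒮 : Set (Finset ℕ)).PairwiseDisjoint D := by
    intro S hS T hT hST
    simp only [Function.onFun, Set.disjoint_left]
    intro ω hωS hωT
    exact hST (hωS.symm.trans hωT)
  have hPD : ∀ S ∈ 𝒮, P (D S) = p ^ S.card * (1 - p) ^ (N - S.card) := by
    intro S hS
    have hSsub : S ⊆ Finset.range N := Finset.mem_powerset.1 (Finset.mem_filter.1 hS).1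
    rw [hDinter S hS, hfact N _ (fun i => by split_ifs; exacts [Or.inl rfl, Or.inr rfl])]
    rw [← Finset.prod_sdiff hSsub]
    have h1 : ∀ i ∈ Finset.range N \ S,
        P (if i ∈ S then {ω | Q i ω} else {ω | Q i ω}ᶜ) = 1 - p := by
      intro i hi
      rw [if_neg (Finset.mem_sdiff.1 hi).2, prob_compl_eq_one_sub (hE i), hp i]
    have h2 : ∀ i ∈ S, P (if i ∈ S then {ω | Q i ω} else {ω | Q i ω}ᶜ) = p := by
      intro i hi
      rw [if_pos hi, hp i]
    rw [Finset.prod_congr rfl h1, Finset.prod_congr rfl h2, Finset.prod_const,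
      Finset.prod_const, Finset.card_sdiff_of_subset hSsub, Finset.card_range, mul_comm]
  rw [hunion, measure_biUnion_finset hdisj hDmeas, Finset.sum_congr rfl hPD]
  have hsplit : 𝒮 = (Finset.range (min k (N + 1))).biUnion
      (fun j => Finset.powersetCard j (Finset.range N)) := by
    ext S
    simp only [h𝒮, Finset.mem_filter, Finset.mem_powerset, Finset.mem_biUnion, Finset.mem_range,
      Finset.mem_powersetCard, lt_min_iff]
    constructor
    · rintro ⟨h1, h2⟩
      exact ⟨S.card, ⟨h2, Nat.lt_succ_of_le ((Finset.card_le_card h1).trans_eq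
        (Finset.card_range N))⟩, h1, rfl⟩
    · rintro ⟨j, hj, h1, rfl⟩; exact ⟨h1, hj.1⟩
  rw [hsplit, Finset.sum_biUnion]
  · refine Finset.sum_congr rfl fun j hj => ?_
    have : ∀ S ∈ Finset.powersetCard j (Finset.range N),
        p ^ S.card * (1 - p) ^ (N - S.card) = p ^ j * (1 - p) ^ (N - j) := by
      intro S hS
      rw [(Finset.mem_powersetCard.1 hS).2]
    rw [Finset.sum_congr rfl this, Finset.sum_const, Finset.card_powersetCard, Finset.card_range,
      nsmul_eq_mul, mul_assoc]
  · intro a ha b hb hab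
    simp only [Function.onFun, Finset.disjoint_left]
    intro S hSa hSb
    exact hab ((Finset.mem_powersetCard.1 hSa).2.symm.trans (Finset.mem_powersetCard.1 hSb).2)

lemma poisson_limit (lam : ℝ) (hlam : 0 ≤ lam) (p : ℕ → ℝ) (hp0 : ∀ N, 0 ≤ p N)
    (hp1 : ∀ N, p N ≤ 1)
    (hNp : Tendsto (fun N : ℕ => (N : ℝ) * p N) atTop (𝓝 lam)) (j : ℕ) :
    Tendsto (fun N : ℕ => (N.choose j : ℝ) * p N ^ j * (1 - p N) ^ (N - j)) atTop
      (𝓝 (lam ^ j / j.factorial * Real.exp (-lam))) := by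
  have hp_to_zero : Tendsto p atTop (𝓝 0) := by
    have h1 : Tendsto (fun N : ℕ => ((N : ℝ) * p N) * (N : ℝ)⁻¹) atTop (𝓝 (lam * 0)) :=
      hNp.mul (tendsto_inv_atTop_zero.comp tendsto_natCast_atTop_atTop)
    rw [mul_zero] at h1
    apply h1.congr'
    filter_upwards [eventually_gt_atTop 0] with N hN
    have : (N : ℝ) ≠ 0 := Nat.cast_ne_zero.2 hN.ne'
    field_simp
  -- part A : choose N j * p^j → lam^j / j!
  have hA : Tendsto (fun N : ℕ => (N.choose j : ℝ) * p N ^ j) atTop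
      (𝓝 (lam ^ j / j.factorial)) := by
    have hprod : Tendsto (fun N : ℕ => ∏ i ∈ Finset.range j, (((N : ℝ) - i) * p N)) atTop
        (𝓝 (lam ^ j)) := by
      have : Tendsto (fun N : ℕ => ∏ i ∈ Finset.range j, (((N : ℝ) - i) * p N)) atTop
          (𝓝 (∏ _i ∈ Finset.range j, lam)) := by
        refine tendsto_finset_prod _ fun i _ => ?_
        have : Tendsto (fun N : ℕ => (N : ℝ) * p N - i * p N) atTop (𝓝 (lam - i * 0)) :=
          hNp.sub ((tendsto_const_nhds).mul hp_to_zero)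
        rw [mul_zero, sub_zero] at this
        exact this.congr fun N => by ring
      rwa [Finset.prod_const, Finset.card_range] at this
    have hdiv := hprod.div_const (j.factorial : ℝ)
    apply hdiv.congr'
    filter_upwards [eventually_ge_atTop j] with N hN
    have h2 : ((N.descFactorial j : ℕ) : ℝ) = ∏ i ∈ Finset.range j, ((N : ℝ) - i) := by
      rw [Nat.descFactorial_eq_prod_range, Nat.cast_prod]
      refine Finset.prod_congr rfl fun i hi => ?_
      have hiN : i ≤ N := le_trans (Finset.mem_range.1 hi).le hN
      push_cast [hiN]
      ring
    have h3 : (N.choose j : ℝ) = (∏ i ∈ Finset.range j, ((N : ℝ) - i)) / j.factorial := by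
      rw [← h2]
      have := Nat.descFactorial_eq_factorial_mul_choose N j
      have h4 : ((N.descFactorial j : ℕ) : ℝ) = (j.factorial : ℝ) * N.choose j := by
        rw [this]; push_cast; ring
      rw [h4]
      field_simp
    rw [h3, Finset.prod_mul_distrib, Finset.prod_const, Finset.card_range]
    ring
  -- part B : (1 - p N)^(N - j) → exp (-lam)
  have hB : Tendsto (fun N : ℕ => (1 - p N) ^ (N - j)) atTop (𝓝 (Real.exp (-lam))) := by
    -- N * (log (1 - p N) + p N) → 0
    have hsq : Tendsto (fun N : ℕ => (N : ℝ) * (Real.log (1 - p N) + p N)) atTop (𝓝 0) := by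
      apply squeeze_zero_norm'
      · filter_upwards [hp_to_zero.eventually (gt_mem_nhds (show (0:ℝ) < 1/2 by norm_num))]
          with N hN
        have hple : |p N| < 1 := by
          rw [abs_of_nonneg (hp0 N)]; linarith
        have key := Real.abs_log_sub_add_sum_range_le hple 1
        simp only [Finset.range_one, Finset.sum_singleton, pow_one] at key
        have hb : |p N + Real.log (1 - p N)| ≤ (p N)^2 / (1 - |p N|) := by
          simpa [pow_succ, pow_one, sq_abs] using key
        have h1 : 1 - |p N| ≥ 1/2 := by rw [abs_of_nonneg (hp0 N)]; linarith
        have h2 : (p N)^2 / (1 - |p N|) ≤ 2 * (p N)^2 := by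
          rw [div_le_iff₀ (by linarith)]
          nlinarith [sq_nonneg (p N)]
        calc ‖(N : ℝ) * (Real.log (1 - p N) + p N)‖
            = (N : ℝ) * |p N + Real.log (1 - p N)| := by
              rw [norm_mul, Real.norm_natCast, Real.norm_eq_abs, add_comm]
          _ ≤ (N : ℝ) * (2 * (p N)^2) := by
              exact mul_le_mul_of_nonneg_left (hb.trans h2) (Nat.cast_nonneg N)
          _ = 2 * (((N:ℝ) * p N) * p N) := by ring
      · have : Tendsto (fun N : ℕ => 2 * (((N:ℝ) * p N) * p N)) atTop (𝓝 (2 * (lam * 0))) :=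
          tendsto_const_nhds.mul (hNp.mul hp_to_zero)
        simpa using this
    have hlog : Tendsto (fun N : ℕ => ((N - j : ℕ) : ℝ) * Real.log (1 - p N)) atTop
        (𝓝 (-lam)) := by
      have hNlog : Tendsto (fun N : ℕ => (N : ℝ) * Real.log (1 - p N)) atTop (𝓝 (-lam)) := by
        have := hsq.sub hNp
        rw [zero_sub] at this
        apply this.congr fun N => by ring
      have hjlog : Tendsto (fun N : ℕ => (j : ℝ) * Real.log (1 - p N)) atTop (𝓝 0) := by
        have hcont : Tendsto (fun N : ℕ => Real.log (1 - p N)) atTop (𝓝 0) := by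
          have h1 : Tendsto (fun N : ℕ => 1 - p N) atTop (𝓝 1) := by
            have := tendsto_const_nhds.sub hp_to_zero (f := fun _ : ℕ => (1:ℝ))
            simpa using this
          have := (Real.continuousAt_log (by norm_num : (1:ℝ) ≠ 0)).tendsto.comp h1
          simpa using (show Tendsto (fun N : ℕ => Real.log (1 - p N)) atTop (𝓝 (Real.log 1)) from this)
        simpa using tendsto_const_nhds.mul hcont
      have := hNlog.sub hjlog
      rw [sub_zero] at this
      apply this.congr'
      filter_upwards [eventually_ge_atTop j] with N hN
      push_cast [hN]
      ring
    have := (Real.continuous_exp.tendsto _).comp hlog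
    apply this.congr'
    filter_upwards [hp_to_zero.eventually (gt_mem_nhds (show (0:ℝ) < 1 by norm_num))] with N hN
    have hpos : 0 < 1 - p N := by
      have := hN
      linarith
    rw [Function.comp_apply, ← Real.log_pow, Real.exp_log (pow_pos hpos _)]
  have := hA.mul hB
  exact this.congr fun N => by ring

lemma knnDist_nonneg {α : Type*} [PseudoMetricSpace α] (k N : ℕ) (x : α) (Y : ℕ → α) :
    0 ≤ knnDist k N x Y :=
  Real.sInf_nonneg fun _ h => h.1

lemma knn_lt_iff {α : Type*} [PseudoMetricSpace α] {k N : ℕ} (hk : 1 ≤ k) (hkN : k ≤ N)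
    (x : α) (Y : ℕ → α) {r : ℝ} (hr : 0 ≤ r) :
    r < knnDist k N x Y
      ↔ ((Finset.range N).filter (fun i => dist x (Y i) ≤ r)).card < k := by
  classical
  have hmono : ∀ {s t : ℝ}, s ≤ t →
      ((Finset.range N).filter (fun i => dist x (Y i) ≤ s)).card
        ≤ ((Finset.range N).filter (fun i => dist x (Y i) ≤ t)).card := by
    intro s t hst
    exact Finset.card_le_card
      (Finset.monotone_filter_right _ fun i _ hi => le_trans hi hst)
  set S : Set ℝ := {s : ℝ | 0 ≤ s ∧
    k ≤ ((Finset.range N).filter (fun i => dist x (Y i) ≤ s)).card} with hSdef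
  have hbdd : BddBelow S := ⟨0, fun s hs => hs.1⟩
  have hN0 : 0 < N := lt_of_lt_of_le hk hkN
  have hSne : S.Nonempty := by
    obtain ⟨R, hRb⟩ : ∃ R : ℝ, ∀ i ∈ Finset.range N, dist x (Y i) ≤ R :=
      ⟨∑ i ∈ Finset.range N, dist x (Y i),
        fun i hi => Finset.single_le_sum (fun j _ => dist_nonneg) hi⟩
    refine ⟨max R 0, le_max_right _ _, ?_⟩
    have hfil : (Finset.range N).filter (fun i => dist x (Y i) ≤ max R 0)
        = Finset.range N := by
      refine Finset.filter_true_of_mem fun i hi => ?_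
      exact le_trans (hRb i hi) (le_max_left _ _)
    rw [hfil, Finset.card_range]
    exact hkN
  have hknn : knnDist k N x Y = sInf S := rfl
  rw [hknn]
  constructor
  · intro h
    by_contra hc
    push_neg at hc
    exact absurd (csInf_le hbdd ⟨hr, hc⟩) (not_le.2 h)
  · intro h
    have hT : ((Finset.range N).filter (fun i => r < dist x (Y i))).Nonempty := by
      by_contra hc
      rw [Finset.not_nonempty_iff_eq_empty, Finset.filter_eq_empty_iff] at hc
      have hfil : (Finset.range N).filter (fun i => dist x (Y i) ≤ r) = Finset.range N := by
        refine Finset.filter_true_of_mem fun i hi => ?_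
        have := hc hi
        push_neg at this
        exact this
      rw [hfil, Finset.card_range] at h
      omega
    set D : ℝ := (((Finset.range N).filter (fun i => r < dist x (Y i))).image
        (fun i => dist x (Y i))).min' (hT.image _) with hDdef
    have hDmem : D ∈ ((Finset.range N).filter (fun i => r < dist x (Y i))).image
        (fun i => dist x (Y i)) := Finset.min'_mem _ _
    have hrD : r < D := by
      obtain ⟨i, hi, hie⟩ := Finset.mem_image.1 hDmem
      rw [← hie]
      exact (Finset.mem_filter.1 hi).2
    refine lt_of_lt_of_le hrD (le_csInf hSne ?_)
    rintro s ⟨hs0, hks⟩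
    have hrs : r ≤ s := by
      by_contra hc
      push_neg at hc
      have := hmono hc.le
      omega
    have hnsub : ¬ ((Finset.range N).filter (fun i => dist x (Y i) ≤ s)
        ⊆ (Finset.range N).filter (fun i => dist x (Y i) ≤ r)) := by
      intro hcsub
      have := Finset.card_le_card hcsub
      omega
    obtain ⟨i, hi_s, hi_r⟩ := Finset.not_subset.1 hnsub
    have hi_range : i ∈ Finset.range N := (Finset.mem_filter.1 hi_s).1
    have hi_far : r < dist x (Y i) := by
      by_contra hc
      push_neg at hc
      exact hi_r (Finset.mem_filter.2 ⟨hi_range, hc⟩)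
    have hDle : D ≤ dist x (Y i) :=
      Finset.min'_le _ _ (Finset.mem_image_of_mem _ (Finset.mem_filter.2 ⟨hi_range, hi_far⟩))
    exact le_trans hDle (Finset.mem_filter.1 hi_s).2

lemma erlang_deriv (m : ℕ) (x : ℝ) :
    HasDerivAt (fun y => -(Real.exp (-y) * ∑ j ∈ Finset.range (m + 1), y ^ j / j.factorial))
      (Real.exp (-x) * x ^ m / m.factorial) x := by
  have h1 : HasDerivAt (fun y : ℝ => Real.exp (-y)) (-Real.exp (-x)) x := by
    simpa using ((hasDerivAt_neg x).exp)
  have h2 : HasDerivAt (fun y : ℝ => ∑ j ∈ Finset.range (m + 1), y ^ j / j.factorial)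
      (∑ j ∈ Finset.range (m + 1), (j : ℝ) * x ^ (j - 1) / j.factorial) x := by
    refine HasDerivAt.fun_sum fun j _ => ?_
    simpa [div_eq_mul_inv, mul_comm, mul_assoc, mul_left_comm] using
      (hasDerivAt_pow j x).div_const (j.factorial : ℝ)
  have h3 : (∑ j ∈ Finset.range (m + 1), (j : ℝ) * x ^ (j - 1) / j.factorial)
      = ∑ j ∈ Finset.range m, x ^ j / j.factorial := by
    rw [Finset.sum_range_succ']
    simp only [Nat.cast_zero, zero_mul, Nat.factorial_zero, Nat.cast_one, zero_div, add_zero]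
    refine Finset.sum_congr rfl fun i _ => ?_
    have : ((i + 1).factorial : ℝ) = (i + 1) * i.factorial := by
      rw [Nat.factorial_succ]; push_cast; ring
    rw [this]
    have hi1 : ((i : ℝ) + 1) ≠ 0 := by positivity
    push_cast
    field_simp
  have h4 : (∑ j ∈ Finset.range (m + 1), x ^ j / j.factorial)
      = (∑ j ∈ Finset.range m, x ^ j / j.factorial) + x ^ m / m.factorial := by
    rw [Finset.sum_range_succ]
  have := ((h1.mul h2).neg)
  rw [h3] at this
  refine this.congr_deriv ?_
  rw [h4]
  ring

lemma gamma_Iic_eq (k : ℕ) (hk : 1 ≤ k) (t : ℝ) (ht : 0 ≤ t) :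
    (gammaMeasure k 1 (Set.Iic t)).toReal
      = 1 - Real.exp (-t) * ∑ j ∈ Finset.range k, t ^ j / j.factorial := by
  obtain ⟨m, rfl⟩ : ∃ m, k = m + 1 := ⟨k - 1, (Nat.succ_pred_eq_of_pos hk).symm⟩
  have ha : (0:ℝ) < (m + 1 : ℕ) := by positivity
  have hr : (0:ℝ) < 1 := one_pos
  have hcdf : (gammaMeasure (m + 1 : ℕ) 1 (Set.Iic t)).toReal
      = ∫ x in Set.Iic t, gammaPDFReal (m + 1 : ℕ) 1 x := by
    have : IsProbabilityMeasure (gammaMeasure (m + 1 : ℕ) 1) :=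
      isProbabilityMeasure_gammaMeasure ha hr
    have h := cdf_gammaMeasure_eq_integral ha hr t
    rw [cdf_eq_real, measureReal_def] at h
    exact h
  rw [hcdf]
  -- the pdf agrees with x^m e^{-x} / m! on [0, ∞)
  have hpdf : ∀ x : ℝ, 0 ≤ x →
      gammaPDFReal (m + 1 : ℕ) 1 x = Real.exp (-x) * x ^ m / m.factorial := by
    intro x hx
    rw [gammaPDFReal, if_pos hx]
    have hG : Real.Gamma ((m + 1 : ℕ) : ℝ) = m.factorial := by
      have : ((m + 1 : ℕ) : ℝ) = (m : ℝ) + 1 := by push_cast; ring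
      rw [this, Real.Gamma_nat_eq_factorial]
    have hpow : x ^ (((m + 1 : ℕ) : ℝ) - 1) = x ^ m := by
      have : (((m + 1 : ℕ) : ℝ) - 1) = ((m : ℕ) : ℝ) := by push_cast; ring
      rw [this, Real.rpow_natCast]
    rw [hG, hpow]
    simp
    ring
  -- split Iic t = Iio 0 ∪ Icc 0 t
  have hsplit : Set.Iic t = Set.Iio 0 ∪ Set.Icc 0 t := (Set.Iio_union_Icc_eq_Iic ht).symm
  have hzero : ∀ x ∈ Set.Iio (0:ℝ), gammaPDFReal (m + 1 : ℕ) 1 x = 0 := by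
    intro x hx
    rw [gammaPDFReal, if_neg (not_le.2 hx)]
  have hint1 : IntegrableOn (gammaPDFReal (m + 1 : ℕ) 1) (Set.Iio 0) := by
    apply IntegrableOn.congr_fun integrableOn_zero (fun x hx => (hzero x hx).symm)
      measurableSet_Iio
  have hcont : Continuous (fun x : ℝ => Real.exp (-x) * x ^ m / m.factorial) :=
    ((Real.continuous_exp.comp continuous_neg).mul (continuous_pow m)).div_const _
  have hint2 : IntegrableOn (gammaPDFReal (m + 1 : ℕ) 1) (Set.Icc 0 t) := by
    apply (hcont.integrableOn_Icc).congr_fun (fun x hx => (hpdf x hx.1).symm) measurableSet_Icc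
  rw [hsplit, setIntegral_union (by simp [Set.disjoint_left]; intros; linarith [le_of_lt ‹_›])
    measurableSet_Icc hint1 hint2]
  rw [setIntegral_congr_fun measurableSet_Iio hzero, integral_zero, zero_add]
  rw [setIntegral_congr_fun measurableSet_Icc (fun x hx => hpdf x hx.1)]
  rw [integral_Icc_eq_integral_Ioc, ← intervalIntegral.integral_of_le ht]
  rw [intervalIntegral.integral_eq_sub_of_hasDerivAt (fun x _ => erlang_deriv m x)
    (hcont.intervalIntegrable 0 t)]
  simp only [Finset.sum_range_succ]
  have h0 : ∑ j ∈ Finset.range (m + 1), (0:ℝ) ^ j / j.factorial = 1 := by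
    rw [Finset.sum_eq_single 0]
    · simp
    · intro j _ hj
      rw [zero_pow hj, zero_div]
    · simp
  rw [← Finset.sum_range_succ, ← Finset.sum_range_succ]
  rw [h0]
  simp [Real.exp_zero]
  ring

lemma gamma_Iic_neg (k : ℕ) {t : ℝ} (ht : t < 0) :
    ProbabilityTheory.gammaMeasure k 1 (Set.Iic t) = 0 := by
  rw [ProbabilityTheory.gammaMeasure, withDensity_apply _ measurableSet_Iic]
  have : ∀ y ∈ Set.Iic t, ProbabilityTheory.gammaPDF k 1 y = 0 := fun y hy =>
    ProbabilityTheory.gammaPDF_of_neg (lt_of_le_of_lt hy ht)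
  rw [setLIntegral_congr_fun measurableSet_Iic this, lintegral_zero]

section Core

variable {Ω : Type*} [MeasurableSpace Ω] (P : Measure Ω) [IsProbabilityMeasure P]
    {d : ℕ} (hd : 1 ≤ d)
    (f : EuclideanSpace ℝ (Fin d) → ℝ) (hf_nonneg : ∀ z, 0 ≤ f z)
    (hf_dens : MeasureTheory.volume.withDensity (fun z => ENNReal.ofReal (f z)) Set.univ = 1)
    (x : EuclideanSpace ℝ (Fin d)) (hx_pos : 0 < f x) (hx_cont : ContinuousAt f x)
    (X : ℕ → Ω → EuclideanSpace ℝ (Fin d)) (hmeas : ∀ i, Measurable (X i))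
    (hindep : iIndepFun X P)
    (hdist : ∀ i, P.map (X i)
      = MeasureTheory.volume.withDensity (fun z => ENNReal.ofReal (f z)))
    (k : ℕ) (hk : 1 ≤ k)
    (Vd : ℝ)
    (hVd : Vd = (MeasureTheory.volume
      (Metric.ball (0 : EuclideanSpace ℝ (Fin d)) 1)).toReal)

include hd hf_nonneg hf_dens hx_pos hx_cont hmeas hindep hdist hk hVd in
lemma core_tendsto
    (c : ℕ → ℝ) (hc : ∀ N, 0 ≤ c N) (lam : ℝ) (hlam : 0 ≤ lam)
    (hclim : Tendsto (fun N : ℕ => (N : ℝ) * (f x * c N)) atTop (𝓝 lam)) :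
    Tendsto (fun N : ℕ =>
        (P {ω | c N < Vd * (knnDist k N x (fun i => X i ω)) ^ d}).toReal)
      atTop (𝓝 (Real.exp (-lam) * ∑ j ∈ Finset.range k, lam ^ j / j.factorial)) := by
  classical
  set μ : Measure (EuclideanSpace ℝ (Fin d)) :=
    MeasureTheory.volume.withDensity (fun z => ENNReal.ofReal (f z)) with hμ
  have hμuniv : μ Set.univ = 1 := hf_dens
  have hB1pos : 0 < MeasureTheory.volume (Metric.ball (0 : EuclideanSpace ℝ (Fin d)) 1) :=
    Metric.measure_ball_pos _ _ one_pos
  have hB1top : MeasureTheory.volume (Metric.ball (0 : EuclideanSpace ℝ (Fin d)) 1) < ⊤ :=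
    measure_ball_lt_top
  have hVd_pos : 0 < Vd := by
    rw [hVd]
    exact ENNReal.toReal_pos hB1pos.ne' hB1top.ne
  have hd0 : (d : ℝ) ≠ 0 := Nat.cast_ne_zero.2 (by omega)
  set r : ℕ → ℝ := fun N => (c N / Vd) ^ ((d : ℝ)⁻¹) with hrdef
  have hr0 : ∀ N, 0 ≤ r N := fun N => Real.rpow_nonneg (div_nonneg (hc N) hVd_pos.le) _
  have hrd : ∀ N, r N ^ d = c N / Vd := by
    intro N
    rw [hrdef]
    rw [← Real.rpow_natCast ((c N / Vd) ^ ((d : ℝ)⁻¹)) d,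
      ← Real.rpow_mul (div_nonneg (hc N) hVd_pos.le), inv_mul_cancel₀ hd0, Real.rpow_one]
  -- the success probability
  set pE : ℕ → ℝ≥0∞ := fun N => μ (Metric.closedBall x (r N)) with hpEdef
  set p : ℕ → ℝ := fun N => (pE N).toReal with hpdef
  have hpE_le : ∀ N, pE N ≤ 1 := fun N => le_trans (measure_mono (Set.subset_univ _))
    (le_of_eq hμuniv)
  have hp0 : ∀ N, 0 ≤ p N := fun N => ENNReal.toReal_nonneg
  have hp1 : ∀ N, p N ≤ 1 := by
    intro N
    rw [hpdef]
    calc (pE N).toReal ≤ (1 : ℝ≥0∞).toReal := ENNReal.toReal_mono (by simp) (hpE_le N)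
      _ = 1 := by simp
  -- volume of the closed ball
  have hvol : ∀ N, MeasureTheory.volume (Metric.closedBall x (r N))
      = ENNReal.ofReal (r N ^ d) * MeasureTheory.volume (Metric.ball (0 : EuclideanSpace ℝ (Fin d)) 1) := by
    intro N
    rw [Measure.addHaar_closedBall _ _ (hr0 N), finrank_euclideanSpace_fin]
  have hvol_toReal : ∀ N, (MeasureTheory.volume (Metric.closedBall x (r N))).toReal = c N := by
    intro N
    rw [hvol N, ENNReal.toReal_mul, ENNReal.toReal_ofReal (pow_nonneg (hr0 N) d), ← hVd,
      hrd N, div_mul_cancel₀ _ hVd_pos.ne']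
  have hvol_top : ∀ N, MeasureTheory.volume (Metric.closedBall x (r N)) < ⊤ := fun N =>
    measure_closedBall_lt_top
  -- event identity for N ≥ k
  have hevent : ∀ N, k ≤ N →
      {ω | c N < Vd * (knnDist k N x (fun i => X i ω)) ^ d}
        = {ω | ((Finset.range N).filter
            (fun i => dist x (X i ω) ≤ r N)).card < k} := by
    intro N hkN
    ext ω
    simp only [Set.mem_setOf_eq]
    rw [← knn_lt_iff hk hkN x (fun i => X i ω) (hr0 N)]
    have hg := knnDist_nonneg k N x (fun i => X i ω)
    have h1 : c N = r N ^ d * Vd := by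
      rw [hrd N, div_mul_cancel₀ _ hVd_pos.ne']
    rw [h1, mul_comm Vd _, mul_lt_mul_iff_left₀ hVd_pos]
    exact pow_lt_pow_iff_left₀ (n := d) (hr0 N) hg (by omega)
  -- probability formula
  have hprob : ∀ N, k ≤ N →
      P {ω | ((Finset.range N).filter (fun i => dist x (X i ω) ≤ r N)).card < k}
        = ∑ j ∈ Finset.range k, (N.choose j) * pE N ^ j * (1 - pE N) ^ (N - j) := by
    intro N hkN
    have hpre : ∀ i, {ω | dist x (X i ω) ≤ r N}
        = (X i) ⁻¹' (Metric.closedBall x (r N)) := by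
      intro i; ext ω; simp [Metric.mem_closedBall, dist_comm]
    have hQmeas : ∀ i, MeasurableSet {ω | dist x (X i ω) ≤ r N} := by
      intro i
      rw [hpre i]
      exact (hmeas i) measurableSet_closedBall
    have hpe : ∀ i, P {ω | dist x (X i ω) ≤ r N} = pE N := by
      intro i
      rw [hpre i, ← Measure.map_apply (hmeas i) measurableSet_closedBall, hdist i]
    have hfact : ∀ (M : ℕ) (F : ℕ → Set Ω),
        (∀ i, F i = {ω | dist x (X i ω) ≤ r N} ∨ F i = {ω | dist x (X i ω) ≤ r N}ᶜ) →
        P (⋂ i ∈ Finset.range M, F i) = ∏ i ∈ Finset.range M, P (F i) := by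
      intro M F hF
      refine hindep.meas_biInter (fun i _ => ?_)
      rcases hF i with h | h
      · exact ⟨Metric.closedBall x (r N), measurableSet_closedBall, by rw [h, hpre i]⟩
      · exact ⟨(Metric.closedBall x (r N))ᶜ, measurableSet_closedBall.compl, by
          rw [h, hpre i, Set.preimage_compl]⟩
    have hb := binom_prob P (fun i ω => dist x (X i ω) ≤ r N) hQmeas (pE N) hpe hfact k N
    rw [hb, min_eq_left (by omega)]
  -- real version
  have hterm_ne_top : ∀ N j, ((N.choose j : ℝ≥0∞) * pE N ^ j * (1 - pE N) ^ (N - j)) ≠ ⊤ := by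
    intro N j
    apply ENNReal.mul_ne_top
    apply ENNReal.mul_ne_top
    · exact ENNReal.natCast_ne_top _
    · exact ENNReal.pow_ne_top (lt_of_le_of_lt (hpE_le N) ENNReal.one_lt_top).ne
    · exact ENNReal.pow_ne_top (lt_of_le_of_lt tsub_le_self ENNReal.one_lt_top).ne
  have hreal : ∀ N, k ≤ N →
      (P {ω | c N < Vd * (knnDist k N x (fun i => X i ω)) ^ d}).toReal
        = ∑ j ∈ Finset.range k, (N.choose j : ℝ) * p N ^ j * (1 - p N) ^ (N - j) := by
    intro N hkN
    rw [hevent N hkN, hprob N hkN, ENNReal.toReal_sum (fun j _ => hterm_ne_top N j)]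
    refine Finset.sum_congr rfl fun j _ => ?_
    rw [ENNReal.toReal_mul, ENNReal.toReal_mul, ENNReal.toReal_pow, ENNReal.toReal_pow,
      ENNReal.toReal_natCast, ENNReal.toReal_sub_of_le (hpE_le N) ENNReal.one_ne_top,
      ENNReal.toReal_one]
  -- auxiliary limits
  have hNc : Tendsto (fun N : ℕ => (N : ℝ) * c N) atTop (𝓝 (lam / f x)) := by
    have h := hclim.const_mul (f x)⁻¹
    rw [inv_mul_eq_div] at h
    apply h.congr fun N => ?_
    field_simp
  have hc0 : Tendsto c atTop (𝓝 0) := by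
    have h1 : Tendsto (fun N : ℕ => ((N : ℝ) * c N) * (N : ℝ)⁻¹) atTop (𝓝 (lam / f x * 0)) :=
      hNc.mul (tendsto_inv_atTop_zero.comp tendsto_natCast_atTop_atTop)
    rw [mul_zero] at h1
    apply h1.congr'
    filter_upwards [eventually_gt_atTop 0] with N hN
    have : (N : ℝ) ≠ 0 := Nat.cast_ne_zero.2 hN.ne'
    field_simp
  have hr_to_zero : Tendsto r atTop (𝓝 0) := by
    have h1 : Tendsto (fun N => c N / Vd) atTop (𝓝 0) := by
      simpa using hc0.div_const Vd
    have h2 := (Real.continuousAt_rpow_const 0 ((d : ℝ)⁻¹)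
      (Or.inr (by positivity))).tendsto.comp h1
    simp only [Function.comp_def] at h2
    rw [Real.zero_rpow (inv_ne_zero hd0)] at h2
    exact h2
  -- the key bound
  have hbound : ∀ δ : ℝ, 0 < δ → ∀ η : ℝ, 0 < η →
      (∀ z, dist z x ≤ η → |f z - f x| ≤ δ) → ∀ N, r N ≤ η →
      |p N - f x * c N| ≤ δ * c N := by
    intro δ hδ η hη hfb N hrη
    have hBmeas : MeasurableSet (Metric.closedBall x (r N)) := measurableSet_closedBall
    have hfz : ∀ z ∈ Metric.closedBall x (r N), f x - δ ≤ f z ∧ f z ≤ f x + δ := by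
      intro z hz
      have h1 := hfb z (le_trans (Metric.mem_closedBall.1 hz) hrη)
      have h2 := abs_le.1 h1
      constructor <;> linarith [h2.1, h2.2]
    have hub : μ (Metric.closedBall x (r N))
        ≤ ENNReal.ofReal (f x + δ) * MeasureTheory.volume (Metric.closedBall x (r N)) := by
      rw [hμ, withDensity_apply _ hBmeas, ← setLIntegral_const,
        ← lintegral_indicator hBmeas, ← lintegral_indicator hBmeas]
      apply lintegral_mono
      intro z
      by_cases hz : z ∈ Metric.closedBall x (r N)
      · simp only [Set.indicator_of_mem hz]
        exact ENNReal.ofReal_le_ofReal (hfz z hz).2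
      · simp [Set.indicator_of_notMem hz]
    have hlb : ENNReal.ofReal (f x - δ) * MeasureTheory.volume (Metric.closedBall x (r N))
        ≤ μ (Metric.closedBall x (r N)) := by
      rw [hμ, withDensity_apply _ hBmeas, ← setLIntegral_const,
        ← lintegral_indicator hBmeas, ← lintegral_indicator hBmeas]
      apply lintegral_mono
      intro z
      by_cases hz : z ∈ Metric.closedBall x (r N)
      · simp only [Set.indicator_of_mem hz]
        exact ENNReal.ofReal_le_ofReal (hfz z hz).1
      · simp [Set.indicator_of_notMem hz]
    have hvolB : (MeasureTheory.volume (Metric.closedBall x (r N))).toReal = c N :=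
      hvol_toReal N
    have hBfin : MeasureTheory.volume (Metric.closedBall x (r N)) ≠ ⊤ := (hvol_top N).ne
    have hμBfin : μ (Metric.closedBall x (r N)) ≠ ⊤ :=
      (lt_of_le_of_lt (hpE_le N) ENNReal.one_lt_top).ne
    have hup : p N ≤ (f x + δ) * c N := by
      have h1 := ENNReal.toReal_mono (ENNReal.mul_ne_top ENNReal.ofReal_ne_top hBfin) hub
      rw [ENNReal.toReal_mul, ENNReal.toReal_ofReal (by positivity), hvolB] at h1
      exact h1
    have hlo : (f x - δ) * c N ≤ p N := by
      by_cases hcase : f x - δ ≤ 0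
      · exact le_trans (mul_nonpos_of_nonpos_of_nonneg hcase (hc N)) (hp0 N)
      · push_neg at hcase
        have h1 := ENNReal.toReal_mono hμBfin hlb
        rw [ENNReal.toReal_mul, ENNReal.toReal_ofReal hcase.le, hvolB] at h1
        exact h1
    rw [abs_le]
    constructor <;> nlinarith [hup, hlo, hc N, hδ]
  -- convergence of N * p N
  have hNp : Tendsto (fun N : ℕ => (N : ℝ) * p N) atTop (𝓝 lam) := by
    rw [Metric.tendsto_atTop]
    intro ε hε
    set C : ℝ := lam / f x + 1 with hC
    have hC0 : 0 < C := by
      have : 0 ≤ lam / f x := div_nonneg hlam hx_pos.le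
      rw [hC]; linarith
    set δ : ℝ := ε / (2 * (C + 1)) with hδdef
    have hδ : 0 < δ := by positivity
    obtain ⟨η, hη, hηf⟩ : ∃ η > 0, ∀ z, dist z x ≤ η → |f z - f x| ≤ δ := by
      obtain ⟨η', hη', h⟩ := Metric.continuousAt_iff.1 hx_cont δ hδ
      refine ⟨η' / 2, by linarith, fun z hz => ?_⟩
      have h2 := h (show dist z x < η' by linarith)
      rw [Real.dist_eq] at h2
      exact h2.le
    obtain ⟨M1, hM1⟩ := Metric.tendsto_atTop.1 hclim (ε / 2) (by positivity)
    obtain ⟨M2, hM2⟩ := Metric.tendsto_atTop.1 hNc 1 one_pos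
    obtain ⟨M3, hM3⟩ := Metric.tendsto_atTop.1 hr_to_zero η hη
    refine ⟨max M1 (max M2 M3), fun N hN => ?_⟩
    have h1 : |(N : ℝ) * (f x * c N) - lam| < ε / 2 := by
      have := hM1 N (le_trans (le_max_left _ _) hN)
      rwa [Real.dist_eq] at this
    have h2 : (N : ℝ) * c N ≤ C := by
      have := hM2 N (le_trans (le_trans (le_max_left _ _) (le_max_right M1 _)) hN)
      rw [Real.dist_eq] at this
      have := (abs_lt.1 this).2
      rw [hC]; linarith
    have h3 : r N ≤ η := by
      have := hM3 N (le_trans (le_trans (le_max_right _ _) (le_max_right M1 _)) hN)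
      rw [Real.dist_eq, sub_zero] at this
      exact le_of_lt (lt_of_abs_lt this)
    have hb := hbound δ hδ η hη hηf N h3
    rw [Real.dist_eq]
    have key : |(N : ℝ) * p N - lam|
        ≤ (N : ℝ) * |p N - f x * c N| + |(N : ℝ) * (f x * c N) - lam| := by
      have heq : (N : ℝ) * p N - lam
          = (N : ℝ) * (p N - f x * c N) + ((N : ℝ) * (f x * c N) - lam) := by ring
      rw [heq]
      refine le_trans (abs_add_le _ _) ?_
      rw [abs_mul, abs_of_nonneg (Nat.cast_nonneg N)]
    have hmid : (N : ℝ) * |p N - f x * c N| ≤ δ * ((N : ℝ) * c N) := by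
      calc (N : ℝ) * |p N - f x * c N| ≤ (N : ℝ) * (δ * c N) :=
            mul_le_mul_of_nonneg_left hb (Nat.cast_nonneg N)
        _ = δ * ((N : ℝ) * c N) := by ring
    have hδC : δ * ((N : ℝ) * c N) ≤ δ * C := mul_le_mul_of_nonneg_left h2 hδ.le
    have hfin : δ * C < ε / 2 := by
      have hlt : δ * C < δ * (C + 1) := by
        apply mul_lt_mul_of_pos_left _ hδ
        linarith
      have heq2 : δ * (C + 1) = ε / 2 := by
        rw [hδdef]
        field_simp
      linarith
    calc |(N : ℝ) * p N - lam|
        ≤ (N : ℝ) * |p N - f x * c N| + |(N : ℝ) * (f x * c N) - lam| := key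
      _ ≤ δ * ((N : ℝ) * c N) + ε / 2 := add_le_add hmid h1.le
      _ ≤ δ * C + ε / 2 := add_le_add_left hδC _
      _ < ε / 2 + ε / 2 := add_lt_add_left hfin _
      _ = ε := by ring
  -- assemble
  have hsum := tendsto_finset_sum (Finset.range k)
    (fun j (_ : j ∈ Finset.range k) => poisson_limit lam hlam p hp0 hp1 hNp j)
  have hval : (∑ j ∈ Finset.range k, lam ^ j / (j.factorial : ℝ) * Real.exp (-lam))
      = Real.exp (-lam) * ∑ j ∈ Finset.range k, lam ^ j / j.factorial := by
    rw [Finset.mul_sum]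
    exact Finset.sum_congr rfl fun j _ => by ring
  rw [← hval]
  apply hsum.congr'
  filter_upwards [eventually_ge_atTop k] with N hkN
  exact (hreal N hkN).symm

end Core

lemma measurable_count_lt {Ω : Type*} [MeasurableSpace Ω] (Q : ℕ → Ω → Prop)
    [∀ i ω, Decidable (Q i ω)] (hE : ∀ i, MeasurableSet {ω | Q i ω}) (N k : ℕ) :
    MeasurableSet {ω | ((Finset.range N).filter (fun i => Q i ω)).card < k} := by
  have hg : Measurable (fun ω => ((Finset.range N).filter (fun i => Q i ω)).card) := by
    have heq : (fun ω => ((Finset.range N).filter (fun i => Q i ω)).card)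
        = fun ω => ∑ i ∈ Finset.range N, if Q i ω then 1 else 0 := by
      funext ω; rw [Finset.card_filter]
    rw [heq]
    exact Finset.measurable_sum _ fun i _ =>
      Measurable.ite (hE i) measurable_const measurable_const
  exact hg (show MeasurableSet {m : ℕ | m < k} from MeasurableSpace.measurableSet_top)

lemma event_iff_count {α : Type*} [PseudoMetricSpace α] {k N d : ℕ} (hk : 1 ≤ k)
    (hkN : k ≤ N) (hd : 1 ≤ d) (x : α) (Y : ℕ → α) {Vd : ℝ} (hVd_pos : 0 < Vd)
    {cN : ℝ} (hcN : 0 ≤ cN) :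
    (cN < Vd * (knnDist k N x Y) ^ d)
      ↔ ((Finset.range N).filter
          (fun i => dist x (Y i) ≤ (cN / Vd) ^ ((d : ℝ)⁻¹))).card < k := by
  have hd0 : (d : ℝ) ≠ 0 := Nat.cast_ne_zero.2 (by omega)
  set rN : ℝ := (cN / Vd) ^ ((d : ℝ)⁻¹) with hrN
  have hr0 : 0 ≤ rN := Real.rpow_nonneg (div_nonneg hcN hVd_pos.le) _
  have hrd : rN ^ d = cN / Vd := by
    rw [hrN, ← Real.rpow_natCast ((cN / Vd) ^ ((d : ℝ)⁻¹)) d,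
      ← Real.rpow_mul (div_nonneg hcN hVd_pos.le), inv_mul_cancel₀ hd0, Real.rpow_one]
  rw [← knn_lt_iff hk hkN x Y hr0]
  have hg := knnDist_nonneg k N x Y
  have h1 : cN = rN ^ d * Vd := by
    rw [hrd, div_mul_cancel₀ _ hVd_pos.ne']
  rw [h1, mul_comm Vd _, mul_lt_mul_iff_left₀ hVd_pos]
  exact pow_lt_pow_iff_left₀ (n := d) hr0 hg (by omega)

/-- Asymptotic distribution of the rescaled `k`-th nearest neighbor
distance for fixed `k`: the exceedance probability converges to the Erlang tail
`e^{-λ} Σ_{j<k} λ^j/j!` with `λ = k(1+ε)`, and `N V_d g_k^N(x)^d f(x)` converges in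
distribution to a `Gamma(k,1)` random variable. -/
theorem stmt_16
    {Ω : Type*} [MeasurableSpace Ω] (P : Measure Ω) [IsProbabilityMeasure P]
    {d : ℕ} (hd : 1 ≤ d)
    (f : EuclideanSpace ℝ (Fin d) → ℝ) (hf_nonneg : ∀ z, 0 ≤ f z)
    (hf_dens : MeasureTheory.volume.withDensity (fun z => ENNReal.ofReal (f z)) Set.univ = 1)
    (x : EuclideanSpace ℝ (Fin d)) (hx_pos : 0 < f x) (hx_cont : ContinuousAt f x)
    (X : ℕ → Ω → EuclideanSpace ℝ (Fin d)) (hmeas : ∀ i, Measurable (X i))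
    (hindep : iIndepFun X P)
    (hdist : ∀ i, P.map (X i)
      = MeasureTheory.volume.withDensity (fun z => ENNReal.ofReal (f z)))
    (k : ℕ) (hk : 1 ≤ k)
    (Vd : ℝ)
    (hVd : Vd = (MeasureTheory.volume
      (Metric.ball (0 : EuclideanSpace ℝ (Fin d)) 1)).toReal) :
    (∀ ε : ℝ, 0 < ε →
      Tendsto
        (fun N : ℕ => (P {ω |
          (k : ℝ) / N * (1 + ε) / f x
            < Vd * (knnDist k N x (fun i => X i ω)) ^ d}).toReal)
        atTop
        (𝓝 (Real.exp (-(k * (1 + ε))) *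
          ∑ j ∈ Finset.range k, (k * (1 + ε) : ℝ) ^ j / j.factorial)))
    ∧ (∀ t : ℝ,
        Tendsto
          (fun N : ℕ => (P {ω |
            (N : ℝ) * Vd * (knnDist k N x (fun i => X i ω)) ^ d * f x ≤ t}).toReal)
          atTop (𝓝 ((gammaMeasure k 1 (Set.Iic t)).toReal))) := by
  have hfx : f x ≠ 0 := hx_pos.ne'
  have hVd_pos : 0 < Vd := by
    rw [hVd]
    exact ENNReal.toReal_pos (Metric.measure_ball_pos _ _ one_pos).ne'
      measure_ball_lt_top.ne
  constructor
  · intro ε hε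
    have hc : ∀ N : ℕ, 0 ≤ (k : ℝ) / N * (1 + ε) / f x := fun N =>
      div_nonneg (mul_nonneg (div_nonneg (Nat.cast_nonneg k) (Nat.cast_nonneg N))
        (by linarith)) hx_pos.le
    have hclim : Tendsto
        (fun N : ℕ => (N : ℝ) * (f x * ((k : ℝ) / N * (1 + ε) / f x))) atTop
        (𝓝 ((k : ℝ) * (1 + ε))) := by
      have hconst : Tendsto (fun _ : ℕ => (k : ℝ) * (1 + ε)) atTop
          (𝓝 ((k : ℝ) * (1 + ε))) := tendsto_const_nhds
      apply hconst.congr'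
      filter_upwards [eventually_ge_atTop 1] with N hN
      have hN0 : (N : ℝ) ≠ 0 := Nat.cast_ne_zero.2 (by omega)
      field_simp
    exact core_tendsto P hd f hf_nonneg hf_dens x hx_pos hx_cont X hmeas hindep hdist
      k hk Vd hVd _ hc ((k : ℝ) * (1 + ε)) (by positivity) hclim
  · intro t
    rcases lt_or_ge t 0 with ht | ht
    · have hempty : ∀ N : ℕ,
          {ω | (N : ℝ) * Vd * (knnDist k N x (fun i => X i ω)) ^ d * f x ≤ t} = ∅ := by
        intro N
        ext ω
        simp only [Set.mem_setOf_eq, Set.mem_empty_iff_false, iff_false, not_le]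
        have hg := knnDist_nonneg k N x (fun i => X i ω)
        have h0 : 0 ≤ (N : ℝ) * Vd * (knnDist k N x (fun i => X i ω)) ^ d * f x := by
          apply mul_nonneg
          apply mul_nonneg
          apply mul_nonneg (Nat.cast_nonneg N) hVd_pos.le
          · exact pow_nonneg hg d
          · exact hx_pos.le
        linarith
      simp only [hempty, measure_empty, ENNReal.toReal_zero]
      rw [gamma_Iic_neg k ht]
      simpa using tendsto_const_nhds (α := ℝ)
    · have hc : ∀ N : ℕ, 0 ≤ t / ((N : ℝ) * f x) := fun N =>
        div_nonneg ht (mul_nonneg (Nat.cast_nonneg N) hx_pos.le)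
      have hclim : Tendsto
          (fun N : ℕ => (N : ℝ) * (f x * (t / ((N : ℝ) * f x)))) atTop (𝓝 t) := by
        have hconst : Tendsto (fun _ : ℕ => t) atTop (𝓝 t) := tendsto_const_nhds
        apply hconst.congr'
        filter_upwards [eventually_ge_atTop 1] with N hN
        have hN0 : (N : ℝ) ≠ 0 := Nat.cast_ne_zero.2 (by omega)
        field_simp
      have hcore := core_tendsto P hd f hf_nonneg hf_dens x hx_pos hx_cont X hmeas hindep
        hdist k hk Vd hVd (fun N => t / ((N : ℝ) * f x)) hc t ht hclim
      have hone := (tendsto_const_nhds (x := (1 : ℝ)) (f := atTop)).sub hcore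
      rw [gamma_Iic_eq k hk t ht]
      apply hone.congr'
      filter_upwards [eventually_ge_atTop (max k 1)] with N hN
      have hkN : k ≤ N := le_trans (le_max_left _ _) hN
      have hN1 : 1 ≤ N := le_trans (le_max_right _ _) hN
      have hNf : 0 < (N : ℝ) * f x := by
        have : (0 : ℝ) < N := by exact_mod_cast hN1
        positivity
      have hAcount : {ω | t / ((N : ℝ) * f x)
            < Vd * (knnDist k N x (fun i => X i ω)) ^ d}
          = {ω | ((Finset.range N).filter (fun i => dist x (X i ω)
              ≤ (t / ((N : ℝ) * f x) / Vd) ^ ((d : ℝ)⁻¹))).card < k} := by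
        ext ω
        simp only [Set.mem_setOf_eq]
        exact event_iff_count hk hkN hd x _ hVd_pos (hc N)
      have hAmeas : MeasurableSet {ω | t / ((N : ℝ) * f x)
          < Vd * (knnDist k N x (fun i => X i ω)) ^ d} := by
        rw [hAcount]
        refine measurable_count_lt _ (fun i => ?_) N k
        have hpre : {ω | dist x (X i ω) ≤ (t / ((N : ℝ) * f x) / Vd) ^ ((d : ℝ)⁻¹)}
            = (X i) ⁻¹' (Metric.closedBall x ((t / ((N : ℝ) * f x) / Vd) ^ ((d : ℝ)⁻¹))) := by
          ext ω
          simp [Metric.mem_closedBall, dist_comm]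
        rw [hpre]
        exact (hmeas i) measurableSet_closedBall
      have hcompl : {ω | (N : ℝ) * Vd * (knnDist k N x (fun i => X i ω)) ^ d * f x ≤ t}
          = {ω | t / ((N : ℝ) * f x)
              < Vd * (knnDist k N x (fun i => X i ω)) ^ d}ᶜ := by
        ext ω
        simp only [Set.mem_setOf_eq, Set.mem_compl_iff, not_lt]
        rw [le_div_iff₀ hNf]
        constructor <;> intro h <;> nlinarith [h]
      rw [hcompl, prob_compl_eq_one_sub hAmeas,
        ENNReal.toReal_sub_of_le prob_le_one ENNReal.one_ne_top, ENNReal.toReal_one]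
end
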